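/- arXiv:1308.0643 — 6 statements merged into one kernel-verified Lean document; each statement's English description precedes it below -/
import Mathlib

section
/- Let α₁, …, αₙ be distinct nonzero complex numbers and r ≠ 0. Define aⱼ = (∏ₖ (αⱼ − αₖ/r)) / (∏_{k≠j} (αⱼ − αₖ)). Then ∑ⱼ aⱼ equals (1 − 1/r) · ∑ⱼ αⱼ, i.e., the sum of the residues of the rational function ∏ⱼ (s − αⱼ/r)/(s − αⱼ) − 1 equals (1 − 1/r) times the sum of the poles. -/
/-!
Put `P = ∏ⱼ (X - βⱼ)` and `Q = ∏ⱼ (X - αⱼ)`. Both are monic of degree `n`, so `P - Q` has degree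
`< n`, and Lagrange interpolation at the nodes `αⱼ` reads off its coefficient of `X^(n-1)`,
namely `∑ αⱼ - ∑ βⱼ`, as `∑ⱼ (P - Q)(αⱼ) / ∏_{k≠j} (αⱼ - αₖ)`; here `(P - Q)(αⱼ) = P(αⱼ)`.
The theorem is the case `βⱼ = αⱼ / r`.
-/

open Complex Finset Polynomial

namespace Lagrange

variable {ι : Type*} {s : Finset ι}

theorem degree_nodal_sub_nodal_lt {R : Type*} [CommRing R] [Nontrivial R] (w v : ι → R) :
    (nodal s w - nodal s v).degree < #s := by
  rw [← degree_nodal (v := w)]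
  exact degree_sub_lt_left (by rw [degree_nodal, degree_nodal]) nodal_ne_zero
    (by rw [nodal_monic.leadingCoeff, nodal_monic.leadingCoeff])

theorem coeff_card_pred_nodal {R : Type*} [CommRing R] (hs : s.Nonempty) (v : ι → R) :
    (nodal s v).coeff (#s - 1) = -∑ i ∈ s, v i :=
  nodal_eq s v ▸ prod_X_sub_C_coeff_card_pred s v hs.card_pos

theorem sum_prod_sub_div_prod_sub {F : Type*} [Field F] [DecidableEq ι] {v : ι → F}
    (hvs : Set.InjOn v s) (w : ι → F) :
    ∑ i ∈ s, (∏ j ∈ s, (v i - w j)) / ∏ j ∈ s.erase i, (v i - v j) =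
      ∑ i ∈ s, v i - ∑ i ∈ s, w i := by
  rcases s.eq_empty_or_nonempty with rfl | hs
  · simp
  have hcoeff := coeff_eq_sum hvs (degree_nodal_sub_nodal_lt w v)
  rw [coeff_sub, coeff_card_pred_nodal hs, coeff_card_pred_nodal hs] at hcoeff
  calc ∑ i ∈ s, (∏ j ∈ s, (v i - w j)) / ∏ j ∈ s.erase i, (v i - v j)
      = ∑ i ∈ s, (nodal s w - nodal s v).eval (v i) / ∏ j ∈ s.erase i, (v i - v j) := by
        refine sum_congr rfl fun i hi => ?_
        rw [eval_sub, eval_nodal_at_node hi, sub_zero, eval_nodal]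
    _ = ∑ i ∈ s, v i - ∑ i ∈ s, w i := by rw [← hcoeff]; ring

end Lagrange

theorem sum_of_residues_general (n : ℕ) (α : Fin n → ℂ)
    (hα : Function.Injective α)
    (r : ℝ)
    (a : Fin n → ℂ)
    (ha : ∀ j, a j = (∏ k, (α j - α k / (r : ℂ))) /
      (∏ k ∈ univ.erase j, (α j - α k))) :
    ∑ j, a j = (1 - 1 / (r : ℂ)) * ∑ j, α j := by
  simp_rw [ha, Lagrange.sum_prod_sub_div_prod_sub hα.injOn fun k => α k / (r : ℂ),
    ← sum_div]
  ring

/-- The sum of the residues a_j of ∏ⱼ (s − αⱼ/r)/(s − αⱼ) − 1 equals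
(1 − 1/r) times the sum of the poles. -/
theorem sum_of_residues (n : ℕ) (α : Fin n → ℂ)
    (hα : Function.Injective α) (hα0 : ∀ j, α j ≠ 0)
    (r : ℝ) (hr : r ≠ 0)
    (a : Fin n → ℂ)
    (ha : ∀ j, a j = (∏ k, (α j - α k / (r : ℂ))) /
      (∏ k ∈ univ.erase j, (α j - α k))) :
    ∑ j, a j = (1 - 1 / (r : ℂ)) * ∑ j, α j :=
  sum_of_residues_general n α hα r a ha
end

section
/- The sum of the zeros (with multiplicity) of the polynomial p_n, defined by p₀ = 1, p₁(z) = z + 1, p_{n+1}(z) = (2n+1)p_n(z) + z² p_{n−1}(z), equals −n(n+1)/2 for every n ≥ 0. -/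
/-!
Along the recurrence the term `X ^ 2 * p n` strictly dominates `(2n+3) • p (n + 1)` in degree,
so `p n` is monic of degree `n`, and comparing coefficients of `X ^ (n + 1)` shows that the
subleading coefficient `c n` of `p n` satisfies `c (n + 2) = c n + (2n + 3)`, with `c 0 = 0`,
`c 1 = 1`; hence `c n = n (n + 1) / 2`. Over `ℂ` the monic `p n` splits, and by Vieta the sum of
its roots is `-c n`.
-/

open Polynomial

namespace Polynomial

variable {R : Type*} [CommRing R]

theorem Monic.nextCoeff_add_of_degree_le {q r : R[X]} {d : ℕ} (hq : q.Monic)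
    (hqd : q.natDegree = d + 1) (hr : r.degree ≤ d) :
    (q + r).nextCoeff = q.nextCoeff + r.coeff d := by
  nontriviality R
  have hlt : r.degree < q.degree := by
    rw [degree_eq_natDegree hq.ne_zero, hqd]
    exact hr.trans_lt (WithBot.coe_lt_coe.mpr d.lt_succ_self)
  have hqrd : (q + r).natDegree = d + 1 := by
    rw [natDegree_add_eq_left_of_degree_lt hlt, hqd]
  rw [nextCoeff_of_natDegree_pos (by omega), nextCoeff_of_natDegree_pos (by omega), hqrd, hqd,
    coeff_add, Nat.add_sub_cancel]

variable [Nontrivial R] {p : ℕ → R[X]} {a : ℕ → R}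

theorem monic_natDegree_of_recurrence {b : R} (h0 : p 0 = 1) (h1 : p 1 = X + C b)
    (hrec : ∀ n, p (n + 2) = a n • p (n + 1) + X ^ 2 * p n) (n : ℕ) :
    (p n).Monic ∧ (p n).natDegree = n := by
  induction n using Nat.twoStepInduction with
  | zero => simp [h0]
  | one => simp [h1, monic_X_add_C]
  | more n ih ih' =>
    have hXm : (X ^ 2 * p n).Monic := (monic_X_pow 2).mul ih.1
    have hXd : (X ^ 2 * p n).natDegree = n + 2 := by
      rw [(monic_X_pow 2).natDegree_mul ih.1, natDegree_X_pow, ih.2, add_comm]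
    have hlt : (a n • p (n + 1)).degree < (X ^ 2 * p n).degree := by
      rw [degree_eq_natDegree hXm.ne_zero, hXd]
      refine (degree_smul_le _ _).trans_lt ?_
      rw [degree_eq_natDegree ih'.1.ne_zero, ih'.2]
      exact Nat.cast_lt.mpr (by omega)
    rw [hrec, add_comm]
    exact ⟨hXm.add_of_left hlt, by rw [natDegree_add_eq_left_of_degree_lt hlt, hXd]⟩

theorem nextCoeff_add_two_of_recurrence {b : R} (h0 : p 0 = 1) (h1 : p 1 = X + C b)
    (hrec : ∀ n, p (n + 2) = a n • p (n + 1) + X ^ 2 * p n) (n : ℕ) :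
    (p (n + 2)).nextCoeff = (p n).nextCoeff + a n := by
  obtain ⟨hm, hd⟩ := monic_natDegree_of_recurrence h0 h1 hrec n
  obtain ⟨hm', hd'⟩ := monic_natDegree_of_recurrence h0 h1 hrec (n + 1)
  have hXd : (X ^ 2 * p n).natDegree = n + 1 + 1 := by
    rw [(monic_X_pow 2).natDegree_mul hm, natDegree_X_pow, hd]; ring
  have hlead : (p (n + 1)).coeff (n + 1) = 1 :=
    (congrArg (p (n + 1)).coeff hd').symm.trans hm'.coeff_natDegree
  have hsd : (a n • p (n + 1)).degree ≤ (n + 1 : ℕ) :=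
    (degree_smul_le _ _).trans (degree_le_of_natDegree_le hd'.le)
  have hX : (X ^ 2 : R[X]).nextCoeff = 0 := by simp [nextCoeff]
  rw [hrec, add_comm, ((monic_X_pow 2).mul hm).nextCoeff_add_of_degree_le hXd hsd,
    (monic_X_pow 2).nextCoeff_mul hm, coeff_smul, hlead, hX, zero_add, smul_eq_mul, mul_one]

end Polynomial

/-- The sum of the zeros (with multiplicity) of the polynomial p_n defined by
p₀ = 1, p₁ = z + 1, p_{n+1} = (2n+1)p_n + z²p_{n−1} equals −n(n+1)/2. -/
theorem sum_of_zeros_pn (p : ℕ → Polynomial ℂ)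
    (hp0 : p 0 = 1) (hp1 : p 1 = X + 1)
    (hprec : ∀ n : ℕ, 1 ≤ n →
      p (n + 1) = (2 * n + 1) • p n + X ^ 2 * p (n - 1)) :
    ∀ n : ℕ, ((p n).roots).sum = -(n * (n + 1)) / 2 := by
  have hp1' : p 1 = X + C 1 := by rw [hp1, map_one]
  have hrec : ∀ n, p (n + 2) = ((2 * (n + 1) + 1 : ℕ) : ℂ) • p (n + 1) + X ^ 2 * p n := by
    intro n
    rw [Nat.cast_smul_eq_nsmul]
    exact hprec (n + 1) (by omega)
  have hnext : ∀ n : ℕ, (p n).nextCoeff = n * (n + 1) / 2 := by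
    intro n
    induction n using Nat.twoStepInduction with
    | zero => rw [hp0, ← C_1, nextCoeff_C_eq_zero]; simp
    | one => rw [hp1', nextCoeff_X_add_C]; simp
    | more n ih _ =>
      rw [nextCoeff_add_two_of_recurrence hp0 hp1' hrec, ih]
      push_cast
      ring
  intro n
  have hmonic := (monic_natDegree_of_recurrence hp0 hp1' hrec n).1
  rw [neg_div, ← hnext, (IsAlgClosed.splits (p n)).nextCoeff_eq_neg_sum_roots_of_monic hmonic,
    neg_neg]
end

section
/- Let r > 1. With α_{n,j} the zeros of k_n and a_{n,j}(r) = (∏ₖ (α_{n,j} − α_{n,k}/r)) / (∏_{k≠j} (α_{n,j} − α_{n,k})), one has ∑_{j=1}^n a_{n,j}(r) = (n(n+1)/2)(1/r − 1). -/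
open Complex Polynomial Finset

/-! With q = ∏ₖ (X - C (αₖ / r)), the coefficient a_{n,j} is q(α_j) / ∏_{k ≠ j} (α_j - α_k), and
p_n(α_j) = 0. So ∑ⱼ a_{n,j} is the Lagrange-interpolation expression for the X^{n-1} coefficient
of q - p_n, which has degree < n because both polynomials are monic of degree n; by Vieta this
coefficient is (1 - 1/r) ∑ₖ αₖ. Vieta again gives ∑ₖ αₖ = -(X^{n-1} coefficient of p_n), and the
three-term recurrence shows that this coefficient is n(n+1)/2. -/

theorem Polynomial.nextCoeff_add_of_natDegree_lt {R : Type*} [Semiring R] {p q : R[X]}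
    (hpq : p.natDegree < q.natDegree) :
    (p + q).nextCoeff = p.coeff (q.natDegree - 1) + q.nextCoeff := by
  have hpos : 0 < q.natDegree := by omega
  have hdeg : (p + q).natDegree = q.natDegree := natDegree_add_eq_right_of_natDegree_lt hpq
  rw [nextCoeff_of_natDegree_pos (hdeg ▸ hpos), nextCoeff_of_natDegree_pos hpos, hdeg, coeff_add]

namespace Lagrange

variable {F ι : Type*} [Field F] [DecidableEq ι] {s : Finset ι} {v : ι → F}

theorem sum_eval_div_prod_erase_eq_nextCoeff_sub (hvs : Set.InjOn v s) {q : F[X]}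
    (hq : q.Monic) (hdeg : q.natDegree = #s) :
    ∑ i ∈ s, q.eval (v i) / ∏ j ∈ s.erase i, (v i - v j) =
      q.nextCoeff - (nodal s v).nextCoeff := by
  rcases s.eq_empty_or_nonempty with rfl | hs
  · simp [nextCoeff, hdeg]
  have hN : (nodal s v).Monic := nodal_monic
  have hNdeg : (nodal s v).natDegree = #s := natDegree_nodal
  have hlt : (q - nodal s v).degree < #s := by
    have hqdeg : q.degree = #s := by rw [degree_eq_natDegree hq.ne_zero, hdeg]
    simpa only [hqdeg] using degree_sub_lt_left (hqdeg.trans degree_nodal.symm) hq.ne_zero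
      (by rw [hq.leadingCoeff, hN.leadingCoeff])
  have hpos : 0 < #s := hs.card_pos
  rw [nextCoeff_of_natDegree_pos (hdeg ▸ hpos), nextCoeff_of_natDegree_pos (hNdeg ▸ hpos),
    hdeg, hNdeg, ← coeff_sub, coeff_eq_sum hvs hlt]
  refine sum_congr rfl fun i hi => ?_
  rw [eval_sub, eval_nodal_at_node hi, sub_zero]

theorem sum_prod_sub_div_div_prod_erase_eq_mul_sum (hvs : Set.InjOn v s) (c : F) :
    ∑ i ∈ s, (∏ j ∈ s, (v i - v j / c)) / ∏ j ∈ s.erase i, (v i - v j) =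
      (1 - c⁻¹) * ∑ i ∈ s, v i := by
  have h := sum_eval_div_prod_erase_eq_nextCoeff_sub hvs nodal_monic
    (natDegree_nodal (v := (v · / c)))
  simp only [eval_nodal] at h
  simp only [nodal_eq, prod_X_sub_C_nextCoeff] at h
  rw [h, ← sum_div]
  ring

end Lagrange

section ReverseBesselRecurrence

variable {p : ℕ → ℂ[X]} (hp0 : p 0 = 1) (hp1 : p 1 = X + 1)
    (hprec : ∀ m : ℕ, 1 ≤ m → p (m + 1) = (2 * m + 1) • p m + X ^ 2 * p (m - 1))
include hp0 hp1 hprec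

theorem reverseBessel_monic_natDegree_nextCoeff (m : ℕ) :
    (p m).Monic ∧ (p m).natDegree = m ∧ (p m).nextCoeff = m * (m + 1) / 2 := by
  induction m using Nat.twoStepInduction with
  | zero => simp [hp0, nextCoeff]
  | one =>
    rw [hp1, ← C_1]
    refine ⟨monic_X_add_C 1, natDegree_X_add_C 1, ?_⟩
    rw [nextCoeff_X_add_C]; norm_num
  | more m ih0 ih1 =>
    obtain ⟨hm0, hd0, hc0⟩ := ih0
    obtain ⟨hm1, hd1, -⟩ := ih1
    have hrec : p (m + 2) = C (2 * m + 3 : ℂ) * p (m + 1) + X ^ 2 * p m := by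
      rw [hprec (m + 1) (by omega), nsmul_eq_mul, ← C_eq_natCast]
      push_cast; ring_nf
    have hX2m : (X ^ 2 * p m).Monic := (monic_X_pow 2).mul hm0
    have hX2deg : (X ^ 2 * p m).natDegree = m + 2 := by
      rw [(monic_X_pow 2).natDegree_mul hm0, natDegree_X_pow, hd0]; omega
    have hlt : (C (2 * m + 3 : ℂ) * p (m + 1)).natDegree < (X ^ 2 * p m).natDegree := by
      rw [hX2deg]; exact (natDegree_C_mul_le _ _).trans_lt (by omega)
    rw [hrec]
    refine ⟨hX2m.add_of_right (degree_lt_degree hlt),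
      by rw [natDegree_add_eq_right_of_natDegree_lt hlt, hX2deg], ?_⟩
    rw [nextCoeff_add_of_natDegree_lt hlt, hX2deg, (monic_X_pow 2).nextCoeff_mul hm0, hc0,
      coeff_C_mul]
    have hlead : (p (m + 1)).coeff (m + 1) = 1 := by
      simpa only [hd1] using hm1.coeff_natDegree
    have hX2 : (X ^ 2 : ℂ[X]).nextCoeff = 0 := by simp [nextCoeff]
    rw [show m + 2 - 1 = m + 1 by omega, hlead, hX2]
    push_cast; ring

end ReverseBesselRecurrence

theorem sum_anj_eq_general (p : ℕ → Polynomial ℂ)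
    (hp0 : p 0 = 1) (hp1 : p 1 = X + 1)
    (hprec : ∀ m : ℕ, 1 ≤ m →
      p (m + 1) = (2 * m + 1) • p m + X ^ 2 * p (m - 1))
    (n : ℕ) (α : Fin n → ℂ) (hα : Function.Injective α)
    (hroots : p n = ∏ j, (X - C (α j)))
    (r : ℝ)
    (a : Fin n → ℂ)
    (ha : ∀ j, a j = (∏ k, (α j - α k / (r : ℂ))) /
      (∏ k ∈ univ.erase j, (α j - α k))) :
    ∑ j, a j = (n * (n + 1) / 2) * (1 / (r : ℂ) - 1) := by
  have hsum : ∑ j, α j = -(n * (n + 1) / 2) := by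
    have hnext := (reverseBessel_monic_natDegree_nextCoeff hp0 hp1 hprec n).2.2
    rw [hroots, prod_X_sub_C_nextCoeff] at hnext
    exact neg_eq_iff_eq_neg.mp hnext
  rw [sum_congr rfl fun j _ => ha j,
    Lagrange.sum_prod_sub_div_div_prod_erase_eq_mul_sum hα.injOn, hsum]
  ring

/-- With α_{n,j} the zeros of k_n (i.e. of the monic polynomial p_n with
k_n(z) = p_n(z)e^{−z}/z^{n+1}) and a_{n,j}(r) the partial fraction
coefficients, one has ∑ⱼ a_{n,j}(r) = (n(n+1)/2)(1/r − 1). -/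
theorem sum_anj_eq (p : ℕ → Polynomial ℂ)
    (hp0 : p 0 = 1) (hp1 : p 1 = X + 1)
    (hprec : ∀ m : ℕ, 1 ≤ m →
      p (m + 1) = (2 * m + 1) • p m + X ^ 2 * p (m - 1))
    (n : ℕ) (α : Fin n → ℂ) (hα : Function.Injective α)
    (hroots : p n = ∏ j, (X - C (α j)))
    (r : ℝ) (hr : 1 < r)
    (a : Fin n → ℂ)
    (ha : ∀ j, a j = (∏ k, (α j - α k / (r : ℂ))) /
      (∏ k ∈ univ.erase j, (α j - α k))) :
    ∑ j, a j = (n * (n + 1) / 2) * (1 / (r : ℂ) - 1) :=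
  sum_anj_eq_general p hp0 hp1 hprec n α hα hroots r a ha
end

section
/- Let α₁, …, αₙ ∈ ℂ, r ≠ 0, and let f : [0,∞) → ℂ be continuous and bounded. Define φ₀ = f and φ_j(t) = φ_{j−1}(t) + (1 − 1/r) α_j ∫₀ᵗ e^{α_j(t−τ)} φ_{j−1}(τ) dτ for j = 1,…,n. Then for Re s sufficiently large, the Laplace transform of φₙ equals F(s) · ∏_{j=1}^n (s − α_j/r)/(s − α_j), where F is the Laplace transform of f. -/
/-! The convolution `K t = ∫₀ᵗ e^{a(t-τ)} u τ dτ` solves `K' = a K + u` with `K 0 = 0`, and it stays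
bounded when `Re a < 0`. Integrating `(e^{-st} K)'` over `(0, ∞)` then gives `L K = L u / (s - a)`, so
each step of the recursion multiplies the Laplace transform by
`1 + (1 - 1/r) αⱼ / (s - αⱼ) = (s - αⱼ/r) / (s - αⱼ)`. -/

open Complex MeasureTheory Filter Topology

noncomputable section

def laplace (u : ℝ → ℂ) (s : ℂ) : ℂ :=
  ∫ t in Set.Ioi (0:ℝ), cexp (-s * t) * u t

def expConv (a : ℂ) (u : ℝ → ℂ) (t : ℝ) : ℂ :=
  ∫ τ in (0:ℝ)..t, cexp (a * (t - τ)) * u τ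

end

lemma sub_ne_zero_of_re_lt {a s : ℂ} (h : a.re < s.re) : s - a ≠ 0 :=
  sub_ne_zero.2 (ne_of_apply_ne re h.ne')

section Laplace

variable {u : ℝ → ℂ} {C : ℝ}

lemma norm_cexp_neg_mul_mul_le (hC : ∀ t, 0 ≤ t → ‖u t‖ ≤ C) (s : ℂ) {t : ℝ} (ht : 0 ≤ t) :
    ‖cexp (-s * t) * u t‖ ≤ C * Real.exp (-s.re * t) := by
  rw [norm_mul, Complex.norm_exp, mul_comm]
  have hre : (-s * t).re = -s.re * t := by simp
  rw [hre]
  exact mul_le_mul_of_nonneg_right (hC t ht) (Real.exp_pos _).le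

lemma integrableOn_laplace_integrand (hu : Continuous u) (hC : ∀ t, 0 ≤ t → ‖u t‖ ≤ C)
    {s : ℂ} (hs : 0 < s.re) :
    IntegrableOn (fun t : ℝ => cexp (-s * t) * u t) (Set.Ioi 0) :=
  ((exp_neg_integrableOn_Ioi 0 hs).const_mul C).mono'
    (by fun_prop : Continuous fun t : ℝ => cexp (-s * t) * u t).aestronglyMeasurable
    (ae_restrict_of_forall_mem measurableSet_Ioi fun _ ht => norm_cexp_neg_mul_mul_le hC s ht.le)

lemma tendsto_cexp_neg_mul_mul_atTop (hC : ∀ t, 0 ≤ t → ‖u t‖ ≤ C) {s : ℂ} (hs : 0 < s.re) :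
    Tendsto (fun t : ℝ => cexp (-s * t) * u t) atTop (𝓝 0) := by
  have hdecay : Tendsto (fun t : ℝ => C * Real.exp (-s.re * t)) atTop (𝓝 0) := by
    simpa using (Real.tendsto_exp_atBot.comp
      (tendsto_id.const_mul_atTop_of_neg (neg_lt_zero.2 hs))).const_mul C
  exact squeeze_zero_norm' ((eventually_ge_atTop 0).mono fun t ht =>
    norm_cexp_neg_mul_mul_le hC s ht) hdecay

end Laplace

section ExpConv

variable {a : ℂ} {u : ℝ → ℂ} {C : ℝ}

lemma expConv_zero (a : ℂ) (u : ℝ → ℂ) : expConv a u 0 = 0 :=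
  intervalIntegral.integral_same

lemma expConv_eq_cexp_mul_integral (a : ℂ) (u : ℝ → ℂ) (t : ℝ) :
    expConv a u t = cexp (a * t) * ∫ τ in (0:ℝ)..t, cexp (-(a * τ)) * u τ := by
  rw [expConv, ← intervalIntegral.integral_const_mul]
  refine intervalIntegral.integral_congr fun τ _ => ?_
  simp only [← mul_assoc, ← Complex.exp_add]
  ring_nf

lemma hasDerivAt_expConv (a : ℂ) (hu : Continuous u) (t : ℝ) :
    HasDerivAt (expConv a u) (a * expConv a u t + u t) t := by
  have hcont : Continuous fun τ : ℝ => cexp (-(a * τ)) * u τ := by fun_prop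
  have hprim : HasDerivAt (fun t : ℝ => ∫ τ in (0:ℝ)..t, cexp (-(a * τ)) * u τ)
      (cexp (-(a * t)) * u t) t :=
    intervalIntegral.integral_hasDerivAt_right (hcont.intervalIntegrable _ _)
      hcont.aestronglyMeasurable.stronglyMeasurableAtFilter hcont.continuousAt
  have hexp : HasDerivAt (fun t : ℝ => cexp (a * t)) (cexp (a * t) * a) t := by
    simpa using ((hasDerivAt_id (t : ℂ)).const_mul a).cexp.comp_ofReal
  have h : HasDerivAt (fun t : ℝ => cexp (a * t) * ∫ τ in (0:ℝ)..t, cexp (-(a * τ)) * u τ) _ t :=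
    hexp.mul hprim
  rw [← funext (expConv_eq_cexp_mul_integral a u)] at h
  refine h.congr_deriv ?_
  rw [expConv_eq_cexp_mul_integral, ← mul_assoc (cexp (a * t)), ← Complex.exp_add, add_neg_cancel,
    Complex.exp_zero]
  ring

lemma continuous_expConv (a : ℂ) (hu : Continuous u) : Continuous (expConv a u) :=
  continuous_iff_continuousAt.2 fun t => (hasDerivAt_expConv a hu t).continuousAt

lemma norm_expConv_le (ha : a.re < 0) (hC : ∀ t, 0 ≤ t → ‖u t‖ ≤ C) {t : ℝ} (ht : 0 ≤ t) :
    ‖expConv a u t‖ ≤ C / -a.re := by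
  have hC0 : 0 ≤ C := (norm_nonneg _).trans (hC 0 le_rfl)
  calc ‖expConv a u t‖ ≤ ∫ τ in (0:ℝ)..t, C * Real.exp (a.re * (t - τ)) := by
        refine intervalIntegral.norm_integral_le_of_norm_le ht (ae_of_all _ fun τ hτ => ?_)
          ((by fun_prop : Continuous fun τ : ℝ => C * Real.exp (a.re * (t - τ))).intervalIntegrable _ _)
        rw [norm_mul, Complex.norm_exp, mul_comm]
        have hre : (a * (t - τ)).re = a.re * (t - τ) := by simp
        rw [hre]
        exact mul_le_mul_of_nonneg_right (hC τ hτ.1.le) (Real.exp_pos _).le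
    _ = C * ∫ x in Set.Ioc 0 t, Real.exp (a.re * x) := by
        rw [intervalIntegral.integral_const_mul,
          intervalIntegral.integral_comp_sub_left (fun x => Real.exp (a.re * x)),
          sub_self, sub_zero, intervalIntegral.integral_of_le ht]
    _ ≤ C * ∫ x in Set.Ioi 0, Real.exp (a.re * x) := by
        exact mul_le_mul_of_nonneg_left (setIntegral_mono_set (integrableOn_exp_mul_Ioi ha 0)
          (ae_of_all _ fun _ => (Real.exp_pos _).le) Set.Ioc_subset_Ioi_self.eventuallyLE) hC0
    _ = C / -a.re := by
        rw [integral_exp_mul_Ioi ha, mul_zero, Real.exp_zero]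
        ring

lemma laplace_expConv (ha : a.re < 0) (hu : Continuous u) (hC : ∀ t, 0 ≤ t → ‖u t‖ ≤ C)
    {s : ℂ} (hs : 0 < s.re) :
    laplace (expConv a u) s = laplace u s / (s - a) := by
  have hK := fun t (ht : 0 ≤ t) => norm_expConv_le ha hC ht
  have hIu := integrableOn_laplace_integrand hu hC hs
  have hIK := integrableOn_laplace_integrand (continuous_expConv a hu) hK hs
  -- `t ↦ e^{-st} (expConv a u) t` vanishes at `0` and at `∞`, so its derivative integrates to zero.
  have hderiv : ∀ t ∈ Set.Ici (0:ℝ), HasDerivAt (fun t : ℝ => cexp (-s * t) * expConv a u t)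
      (cexp (-s * t) * u t + (a - s) * (cexp (-s * t) * expConv a u t)) t := by
    intro t _
    have hexp : HasDerivAt (fun t : ℝ => cexp (-s * t)) (cexp (-s * t) * -s) t := by
      simpa using ((hasDerivAt_id (t : ℂ)).const_mul (-s)).cexp.comp_ofReal
    refine (hexp.mul (hasDerivAt_expConv a hu t)).congr_deriv ?_
    ring
  have hFTC := integral_Ioi_of_hasDerivAt_of_tendsto' hderiv (hIu.add (hIK.const_mul _))
    (tendsto_cexp_neg_mul_mul_atTop hK hs)
  rw [integral_add hIu (hIK.const_mul _), integral_const_mul, expConv_zero, mul_zero,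
    sub_zero] at hFTC
  rw [eq_div_iff (sub_ne_zero_of_re_lt (by linarith))]
  unfold laplace
  linear_combination -hFTC

end ExpConv

section Recursion

variable {a : ℂ} {u : ℝ → ℂ} {C : ℝ}

lemma norm_add_mul_expConv_le (ha : a.re < 0) (hC : ∀ t, 0 ≤ t → ‖u t‖ ≤ C) (c : ℂ) {t : ℝ}
    (ht : 0 ≤ t) : ‖u t + c * expConv a u t‖ ≤ C + ‖c‖ * (C / -a.re) := by
  refine (norm_add_le _ _).trans (add_le_add (hC t ht) ?_)
  rw [norm_mul]
  exact mul_le_mul_of_nonneg_left (norm_expConv_le ha hC ht) (norm_nonneg c)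

lemma laplace_add_mul_expConv (ha : a.re < 0) (hu : Continuous u) (hC : ∀ t, 0 ≤ t → ‖u t‖ ≤ C)
    (c : ℂ) {s : ℂ} (hs : 0 < s.re) :
    laplace (fun t => u t + c * expConv a u t) s = laplace u s * (1 + c / (s - a)) := by
  have hIu := integrableOn_laplace_integrand hu hC hs
  have hIK := integrableOn_laplace_integrand (continuous_expConv a hu)
    (fun _ ht => norm_expConv_le ha hC ht) hs
  have hsplit : laplace (fun t => u t + c * expConv a u t) s =
      laplace u s + c * laplace (expConv a u) s := by
    rw [laplace, laplace, laplace, ← integral_const_mul, ← integral_add hIu (hIK.const_mul c)]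
    congr 1 with t
    ring
  rw [hsplit, laplace_expConv ha hu hC hs]
  ring

theorem laplace_iterate_add_mul_expConv {n : ℕ} (a c : Fin n → ℂ) (ha : ∀ j, (a j).re < 0)
    {φ : ℕ → ℝ → ℂ} (hφ0 : Continuous (φ 0)) (hC : ∀ t, 0 ≤ t → ‖φ 0 t‖ ≤ C)
    (hφ : ∀ (j : Fin n) (t : ℝ), φ (j + 1) t = φ j t + c j * expConv (a j) (φ j) t)
    {s : ℂ} (hs : 0 < s.re) :
    Continuous (φ n) ∧ (∃ C', ∀ t, 0 ≤ t → ‖φ n t‖ ≤ C') ∧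
      laplace (φ n) s = laplace (φ 0) s * ∏ j, (1 + c j / (s - a j)) := by
  induction n with
  | zero => exact ⟨hφ0, ⟨C, hC⟩, by simp⟩
  | succ n ih =>
    obtain ⟨hcont, ⟨C', hC'⟩, hL⟩ := ih (fun j => a j.castSucc) (fun j => c j.castSucc)
      (fun j => ha _) (fun j => hφ j.castSucc)
    have hlast : φ (n + 1) = fun t => φ n t + c (Fin.last n) * expConv (a (Fin.last n)) (φ n) t :=
      funext (hφ (Fin.last n))
    rw [hlast, Fin.prod_univ_castSucc, ← mul_assoc, ← hL]
    exact ⟨hcont.add (continuous_const.mul (continuous_expConv _ hcont)),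
      ⟨_, fun t ht => norm_add_mul_expConv_le (ha _) hC' _ ht⟩,
      laplace_add_mul_expConv (ha _) hcont hC' _ hs⟩

end Recursion

theorem laplace_recursion_dirichlet_general (n : ℕ) (α : Fin n → ℂ)
    (hα : ∀ j, (α j).re < 0) (r : ℝ)
    (f : ℝ → ℂ) (hf : Continuous f) (M : ℝ)
    (hbd : ∀ t : ℝ, 0 ≤ t → ‖f t‖ ≤ M)
    (φ : ℕ → ℝ → ℂ) (hφ0 : φ 0 = f)
    (hφ : ∀ (j : Fin n) (t : ℝ),
      φ (j + 1) t = φ j t + (1 - 1 / (r : ℂ)) * α j *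
        ∫ τ in (0:ℝ)..t, Complex.exp (α j * (t - τ)) * φ j τ)
    (s : ℂ) (hs : 0 < s.re) :
    ∫ t in Set.Ioi (0:ℝ), Complex.exp (-s * t) * φ n t =
      (∫ t in Set.Ioi (0:ℝ), Complex.exp (-s * t) * f t) *
        ∏ j, (s - α j / (r : ℂ)) / (s - α j) := by
  subst hφ0
  have hfactor (j : Fin n) :
      1 + (1 - 1 / (r : ℂ)) * α j / (s - α j) = (s - α j / r) / (s - α j) := by
    rw [one_add_div (sub_ne_zero_of_re_lt ((hα j).trans hs))]
    ring
  obtain ⟨-, -, hL⟩ := laplace_iterate_add_mul_expConv α (fun j => (1 - 1 / (r : ℂ)) * α j) hα hf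
    hbd hφ hs
  simp_rw [hfactor] at hL
  exact hL

/-- The recursion (3.2.3) realizes multiplication by the rational function
∏ⱼ (s − αⱼ/r)/(s − αⱼ) in the Laplace transform domain. -/
theorem laplace_recursion_dirichlet (n : ℕ) (α : Fin n → ℂ)
    (hα : ∀ j, (α j).re < 0) (r : ℝ) (hr : r ≠ 0)
    (f : ℝ → ℂ) (hf : Continuous f) (M : ℝ)
    (hbd : ∀ t : ℝ, 0 ≤ t → ‖f t‖ ≤ M)
    (φ : ℕ → ℝ → ℂ) (hφ0 : φ 0 = f)
    (hφ : ∀ (j : Fin n) (t : ℝ),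
      φ (j + 1) t = φ j t + (1 - 1 / (r : ℂ)) * α j *
        ∫ τ in (0:ℝ)..t, Complex.exp (α j * (t - τ)) * φ j τ)
    (s : ℂ) (hs : 0 < s.re) :
    ∫ t in Set.Ioi (0:ℝ), Complex.exp (-s * t) * φ n t =
      (∫ t in Set.Ioi (0:ℝ), Complex.exp (-s * t) * f t) *
        ∏ j, (s - α j / (r : ℂ)) / (s - α j) :=
  laplace_recursion_dirichlet_general n α hα r f hf M hbd φ hφ0 hφ s hs
end

section
/- The functions φ₁, …, φₙ produced by the recursion φ_j(t) = φ_{j−1}(t) + (1 − 1/r)α_j ∫₀ᵗ e^{α_j(t−τ)}φ_{j−1}(τ)dτ with φ₀ = f (f continuously differentiable, f(0)=0) solve the lower bidiagonal ODE system A φ' = B φ + F(t) with zero initial conditions, where A is the n×n matrix with 1 on the diagonal and −1 on the subdiagonal, B has α_{j} on the diagonal and −α_{j}/r on the subdiagonal (entry (j, j−1)), and F has only first component F₁(t) = f'(t) − (α₁/r) f(t). -/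
/-!
Writing `∫₀ˢ e^{a(s-τ)} h(τ) dτ = e^{as} ∫₀ˢ e^{-aτ} h(τ) dτ`, the product rule and the
fundamental theorem of calculus show that this integral `I` satisfies `I' = a I + h`.
Hence `φⱼ₊₁ = φⱼ + c αⱼ I` (with `c = 1 - 1/r`) is differentiable as soon as `φⱼ` is, with
`φⱼ₊₁' = φⱼ' + αⱼ (φⱼ₊₁ - φⱼ) + c αⱼ φⱼ = φⱼ' + αⱼ φⱼ₊₁ - (αⱼ/r) φⱼ`, and the system follows
by induction on `j` from `φ₀ = f`.
-/

open Complex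

theorem integral_exp_mul_sub_mul (a : ℂ) (h : ℝ → ℂ) (s : ℝ) :
    ∫ τ in (0:ℝ)..s, exp (a * (s - τ)) * h τ =
      exp (a * s) * ∫ τ in (0:ℝ)..s, exp (-(a * τ)) * h τ := by
  rw [← intervalIntegral.integral_const_mul]
  congr 1 with τ
  rw [← mul_assoc, ← exp_add]
  ring_nf

theorem hasDerivAt_integral_exp_mul_sub_mul (a : ℂ) {h : ℝ → ℂ} (hh : Continuous h) (t : ℝ) :
    HasDerivAt (fun s : ℝ => ∫ τ in (0:ℝ)..s, exp (a * (s - τ)) * h τ)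
      (a * (∫ τ in (0:ℝ)..t, exp (a * (t - τ)) * h τ) + h t) t := by
  have hexp : HasDerivAt (fun s : ℝ => exp (a * s)) (exp (a * t) * a) t := by
    simpa using ((hasDerivAt_id (t : ℂ)).const_mul a).cexp.comp_ofReal
  have hint : HasDerivAt (fun s : ℝ => ∫ τ in (0:ℝ)..s, exp (-(a * τ)) * h τ)
      (exp (-(a * t)) * h t) t :=
    ((by fun_prop : Continuous fun τ : ℝ => exp (-(a * τ)) * h τ).integral_hasStrictDerivAt
      0 t).hasDerivAt
  have hinv : exp (a * t) * exp (-(a * t)) = 1 := by rw [← exp_add, add_neg_cancel, exp_zero]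
  simp only [integral_exp_mul_sub_mul]
  refine (hexp.mul hint).congr_deriv ?_
  linear_combination h t * hinv

theorem hasDerivAt_of_eq_add_mul_integral_exp {g ψ : ℝ → ℂ} (hg : Differentiable ℝ g) (a c : ℂ)
    (hψ : ∀ t, ψ t = g t + c * a * ∫ τ in (0:ℝ)..t, exp (a * (t - τ)) * g τ) (t : ℝ) :
    HasDerivAt ψ (deriv g t + a * (ψ t - g t) + c * a * g t) t := by
  rw [funext hψ]
  have hint := (hasDerivAt_integral_exp_mul_sub_mul a hg.continuous t).const_mul (c * a)
  refine ((hg t).hasDerivAt.add hint).congr_deriv ?_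
  ring

theorem recursion_solves_ODE_system_general (n : ℕ) (α : Fin n → ℂ) (r : ℝ)
    (f : ℝ → ℂ) (hf : ContDiff ℝ 1 f) (hf0 : f 0 = 0)
    (φ : ℕ → ℝ → ℂ) (hφ0 : φ 0 = f)
    (hφ : ∀ (j : Fin n) (t : ℝ),
      φ (j + 1) t = φ j t + (1 - 1 / (r : ℂ)) * α j *
        ∫ τ in (0:ℝ)..t, Complex.exp (α j * (t - τ)) * φ j τ) :
    (∀ j : Fin n, Differentiable ℝ (φ (j + 1))) ∧
    (∀ j : Fin n, φ (j + 1) 0 = 0) ∧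
    (∀ hn : 0 < n, ∀ t : ℝ,
      deriv (φ 1) t = α ⟨0, hn⟩ * φ 1 t +
        (deriv f t - (α ⟨0, hn⟩ / (r : ℂ)) * f t)) ∧
    (∀ j : Fin n, (j : ℕ) ≠ 0 → ∀ t : ℝ,
      deriv (φ (j + 1)) t - deriv (φ j) t =
        α j * φ (j + 1) t - (α j / (r : ℂ)) * φ j t) := by
  have hstep : ∀ j : Fin n, Differentiable ℝ (φ j) → ∀ t, HasDerivAt (φ (j + 1))
      (deriv (φ j) t + α j * (φ (j + 1) t - φ j t) + (1 - 1 / (r : ℂ)) * α j * φ j t) t :=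
    fun j hj => hasDerivAt_of_eq_add_mul_integral_exp hj _ _ (hφ j)
  have hdiff : ∀ m ≤ n, Differentiable ℝ (φ m) := by
    intro m
    induction m with
    | zero => exact fun _ => hφ0 ▸ hf.differentiable one_ne_zero
    | succ k ih => exact fun hk t => (hstep ⟨k, hk⟩ (ih (by omega)) t).differentiableAt
  have hzero : ∀ m ≤ n, φ m 0 = 0 := by
    intro m
    induction m with
    | zero => exact fun _ => hφ0 ▸ hf0
    | succ k ih => intro hk; simp [hφ ⟨k, hk⟩ 0, ih (by omega)]
  have hderiv : ∀ j : Fin n, ∀ t, deriv (φ (j + 1)) t =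
      deriv (φ j) t + α j * (φ (j + 1) t - φ j t) + (1 - 1 / (r : ℂ)) * α j * φ j t :=
    fun j t => (hstep j (hdiff j j.is_lt.le) t).deriv
  refine ⟨fun j t => (hstep j (hdiff j j.is_lt.le) t).differentiableAt,
    fun j => hzero (j + 1) j.is_lt, fun hn t => ?_, fun j _ t => ?_⟩
  · rw [hderiv ⟨0, hn⟩ t, show ((⟨0, hn⟩ : Fin n) : ℕ) = 0 from rfl, hφ0]
    ring
  · rw [hderiv j t]
    ring

/-- The functions φ₁,…,φₙ from the recursion (3.2.3) solve the lower
bidiagonal ODE system A φ' = B φ + F with zero initial conditions, where A has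
1 on the diagonal, −1 on the subdiagonal, B has αⱼ on the diagonal and −αⱼ/r
on the subdiagonal, F₁(t) = f'(t) − (α₁/r)f(t) and all other components of F
vanish.  (Here α j, φ (j+1) denote α_{j+1}, φ_{j+1} for j : Fin n.) -/
theorem recursion_solves_ODE_system (n : ℕ) (α : Fin n → ℂ) (r : ℝ) (hr : 1 < r)
    (f : ℝ → ℂ) (hf : ContDiff ℝ 1 f) (hf0 : f 0 = 0)
    (φ : ℕ → ℝ → ℂ) (hφ0 : φ 0 = f)
    (hφ : ∀ (j : Fin n) (t : ℝ),
      φ (j + 1) t = φ j t + (1 - 1 / (r : ℂ)) * α j *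
        ∫ τ in (0:ℝ)..t, Complex.exp (α j * (t - τ)) * φ j τ) :
    (∀ j : Fin n, Differentiable ℝ (φ (j + 1))) ∧
    (∀ j : Fin n, φ (j + 1) 0 = 0) ∧
    (∀ hn : 0 < n, ∀ t : ℝ,
      deriv (φ 1) t = α ⟨0, hn⟩ * φ 1 t +
        (deriv f t - (α ⟨0, hn⟩ / (r : ℂ)) * f t)) ∧
    (∀ j : Fin n, (j : ℕ) ≠ 0 → ∀ t : ℝ,
      deriv (φ (j + 1)) t - deriv (φ j) t =
        α j * φ (j + 1) t - (α j / (r : ℂ)) * φ j t) :=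
  recursion_solves_ODE_system_general n α r f hf hf0 φ hφ0 hφ
end

section
/- Let α ∈ ℂ, y ∈ [−1,1], and define r_i(z,y) = ∫_{−1}^{y} e^{z(y−x)} P_i(x) dx. Then for i ≥ 1, r_{i+1}(z,y) = ((2i+1)/z) r_i(z,y) + r_{i−1}(z,y) − (1/z)(P_{i+1}(y) − P_{i−1}(y)), with r₀(z,y) = (e^{z(1+y)} − 1)/z and r₁(z,y) = (e^{z(1+y)}(1 − z) − (1 + zy))/z² for z ≠ 0. -/
/-!
Rodrigues' formula gives `P_{m+2} - P_m = (2m+3)/(2^{m+1}(m+1)!) · D^m (X² - 1)^{m+1}`, because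
`D² (X² - 1)^{m+2}` is a combination of `(X² - 1)^{m+1}` and `(X² - 1)^m`. Hence
`q = P_{i+1} - P_{i-1}` satisfies `q' = (2i+1) P_i` and vanishes at `-1` (where `(X² - 1)^i`
has a zero of order `i`). Integrating `e^{z(y-x)} q'(x)` by parts over `[-1, y]` gives the
recurrence; the same integration by parts applied to `1` and `X` gives `r₀` and `r₁`.
-/

open Complex Polynomial

/-- The i-th Legendre polynomial, via the Rodrigues formula
P_i(x) = (1/(2^i i!)) dⁱ/dxⁱ (x² − 1)ⁱ. -/
noncomputable def legendrePoly (i : ℕ) : Polynomial ℝ :=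
  Polynomial.C (1 / (2 ^ i * (i.factorial : ℝ))) *
    (Polynomial.derivative^[i] ((Polynomial.X ^ 2 - 1) ^ i))

theorem eval_iterate_derivative_eq_zero_of_pow_dvd {R : Type*} [CommRing R] {p : R[X]} {a : R}
    {k : ℕ} (h : (X - C a) ^ (k + 1) ∣ p) : (derivative^[k] p).eval a = 0 := by
  obtain ⟨q, hq⟩ := pow_sub_dvd_iterate_derivative_of_pow_dvd k h
  simp [hq]

theorem derivative_X_sq_sub_one_pow_succ (n : ℕ) :
    derivative ((X ^ 2 - 1 : ℝ[X]) ^ (n + 1)) = C (2 * ((n : ℝ) + 1)) * X * (X ^ 2 - 1) ^ n := by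
  rw [derivative_pow, derivative_sub, derivative_X_pow, derivative_one, Nat.add_sub_cancel]
  simp only [map_mul, map_ofNat, Nat.cast_add, Nat.cast_one, map_add, map_natCast, map_one]
  ring

theorem iterate_derivative_two_X_sq_sub_one_pow (m : ℕ) :
    derivative^[2] ((X ^ 2 - 1 : ℝ[X]) ^ (m + 2)) =
      C (2 * ((m : ℝ) + 2)) *
        (C (2 * (m : ℝ) + 3) * (X ^ 2 - 1) ^ (m + 1) + C (2 * ((m : ℝ) + 1)) * (X ^ 2 - 1) ^ m) := by
  rw [Function.iterate_succ_apply, Function.iterate_one, derivative_X_sq_sub_one_pow_succ,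
    derivative_mul, derivative_mul, derivative_C, derivative_X, derivative_X_sq_sub_one_pow_succ]
  simp only [map_mul, map_ofNat, map_add, map_natCast, map_one]
  push_cast
  ring

theorem legendrePoly_zero : legendrePoly 0 = 1 := by
  simp [legendrePoly]

theorem legendrePoly_one : legendrePoly 1 = X := by
  simp [legendrePoly, derivative_sq, ← mul_assoc, ← C_mul]

theorem legendrePoly_add_two_sub (m : ℕ) :
    legendrePoly (m + 2) - legendrePoly m =
      C ((2 * m + 3) / (2 ^ (m + 1) * ((m + 1).factorial : ℝ))) *
        derivative^[m] ((X ^ 2 - 1 : ℝ[X]) ^ (m + 1)) := by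
  have h := congrArg (derivative^[m]) (iterate_derivative_two_X_sq_sub_one_pow m)
  rw [← Function.iterate_add_apply] at h
  simp only [iterate_derivative_C_mul, iterate_map_add] at h
  have hm : (m.factorial : ℝ) ≠ 0 := Nat.cast_ne_zero.2 m.factorial_ne_zero
  have hc₁ : 1 / (2 ^ (m + 2) * ((m + 2).factorial : ℝ)) * (2 * (m + 2)) * (2 * m + 3) =
      (2 * m + 3) / (2 ^ (m + 1) * (m + 1).factorial) := by
    simp only [Nat.factorial_succ]; push_cast; field_simp; ring
  have hc₂ : 1 / (2 ^ (m + 2) * ((m + 2).factorial : ℝ)) * (2 * (m + 2)) * (2 * (m + 1)) =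
      1 / (2 ^ m * m.factorial) := by
    simp only [Nat.factorial_succ]; push_cast; field_simp; ring
  unfold legendrePoly
  rw [h, ← hc₁, ← hc₂]
  simp only [map_mul]
  ring

theorem derivative_legendrePoly_add_two_sub (m : ℕ) :
    derivative (legendrePoly (m + 2) - legendrePoly m) =
      C (2 * (m : ℝ) + 3) * legendrePoly (m + 1) := by
  rw [legendrePoly_add_two_sub, derivative_C_mul, ← Function.iterate_succ_apply' derivative,
    legendrePoly, ← mul_assoc, ← C_mul, mul_one_div]

theorem eval_neg_one_legendrePoly_add_two_sub (m : ℕ) :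
    (legendrePoly (m + 2) - legendrePoly m).eval (-1) = 0 := by
  have h : (X - C (-1 : ℝ)) ^ (m + 1) ∣ (X ^ 2 - 1) ^ (m + 1) :=
    pow_dvd_pow_of_dvd ⟨X - 1, by simp only [map_neg, map_one]; ring⟩ _
  rw [legendrePoly_add_two_sub, eval_mul, eval_iterate_derivative_eq_zero_of_pow_dvd h, mul_zero]

theorem hasDerivAt_cexp_mul_sub (z : ℂ) (b x : ℝ) :
    HasDerivAt (fun x : ℝ ↦ cexp (z * (b - x))) (-z * cexp (z * (b - x))) x := by
  have h : HasDerivAt (fun x : ℝ ↦ z * (b - x)) (-z) x := by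
    simpa using ((hasDerivAt_const x (b : ℂ)).sub (hasDerivAt_id x).ofReal_comp).const_mul z
  simpa [mul_comm] using h.cexp

theorem integral_cexp_mul_deriv {f f' : ℝ → ℂ} {a b : ℝ} (z : ℂ)
    (hf : ∀ x ∈ Set.uIcc a b, HasDerivAt f (f' x) x)
    (hf' : IntervalIntegrable f' MeasureTheory.volume a b) :
    ∫ x in a..b, cexp (z * (b - x)) * f' x =
      f b - cexp (z * (b - a)) * f a + z * ∫ x in a..b, cexp (z * (b - x)) * f x := by
  rw [intervalIntegral.integral_mul_deriv_eq_deriv_mul (fun x _ ↦ hasDerivAt_cexp_mul_sub z b x)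
    hf (Continuous.intervalIntegrable (by fun_prop) a b) hf']
  simp only [sub_self, mul_zero, Complex.exp_zero, one_mul, neg_mul, mul_assoc,
    intervalIntegral.integral_neg, intervalIntegral.integral_const_mul]
  ring

noncomputable def incompleteMoment (z : ℂ) (y : ℝ) (q : ℝ[X]) : ℂ :=
  ∫ x in (-1 : ℝ)..y, cexp (z * (y - x)) * q.eval x

section IncompleteMoment

variable (z : ℂ) (y : ℝ)

theorem intervalIntegrable_cexp_mul_eval (q : ℝ[X]) :
    IntervalIntegrable (fun x : ℝ ↦ cexp (z * (y - x)) * q.eval x) MeasureTheory.volume (-1) y :=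
  Continuous.intervalIntegrable (by fun_prop) _ _

theorem incompleteMoment_sub (p q : ℝ[X]) :
    incompleteMoment z y (p - q) = incompleteMoment z y p - incompleteMoment z y q := by
  rw [incompleteMoment, incompleteMoment, incompleteMoment,
    ← intervalIntegral.integral_sub (intervalIntegrable_cexp_mul_eval z y p)
    (intervalIntegrable_cexp_mul_eval z y q)]
  simp only [eval_sub, ofReal_sub, mul_sub]

theorem incompleteMoment_zero : incompleteMoment z y 0 = 0 := by
  simp [incompleteMoment]

theorem incompleteMoment_C_mul (c : ℝ) (q : ℝ[X]) :
    incompleteMoment z y (C c * q) = c * incompleteMoment z y q := by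
  simp only [incompleteMoment, eval_mul, eval_C, ofReal_mul, mul_left_comm _ (c : ℂ),
    intervalIntegral.integral_const_mul]

theorem incompleteMoment_derivative (q : ℝ[X]) :
    incompleteMoment z y (derivative q) =
      q.eval y - cexp (z * (1 + y)) * q.eval (-1) + z * incompleteMoment z y q := by
  have h := integral_cexp_mul_deriv z (fun x _ ↦ (q.hasDerivAt x).ofReal_comp)
    (Continuous.intervalIntegrable (by fun_prop) (-1) y)
  rwa [ofReal_neg, ofReal_one, sub_neg_eq_add, add_comm (y : ℂ)] at h

end IncompleteMoment

theorem incomplete_legendre_moment_recurrence_general (z : ℂ) (hz : z ≠ 0)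
    (y : ℝ)
    (R : ℕ → ℂ)
    (hR : ∀ i : ℕ, R i =
      ∫ x in (-1:ℝ)..y, Complex.exp (z * ((y : ℂ) - x)) *
        (((legendrePoly i).eval x : ℝ) : ℂ)) :
    (∀ i : ℕ, 1 ≤ i → R (i + 1) = ((2 * i + 1) / z) * R i + R (i - 1)
        - (1 / z) * ((((legendrePoly (i + 1)).eval y : ℝ) : ℂ)
          - (((legendrePoly (i - 1)).eval y : ℝ) : ℂ))) ∧
    R 0 = (Complex.exp (z * (1 + (y : ℂ))) - 1) / z ∧
    R 1 = (Complex.exp (z * (1 + (y : ℂ))) * (1 - z) - (1 + z * (y : ℂ))) / z ^ 2 := by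
  have hR' : ∀ i, R i = incompleteMoment z y (legendrePoly i) := hR
  have h₀ := incompleteMoment_derivative z y 1
  have h₁ := incompleteMoment_derivative z y X
  simp only [eval_one, eval_X, ofReal_one, ofReal_neg] at h₀ h₁
  rw [derivative_one, incompleteMoment_zero, ← legendrePoly_zero, ← hR'] at h₀
  rw [derivative_X, ← legendrePoly_zero, ← legendrePoly_one, ← hR', ← hR'] at h₁
  refine ⟨fun i hi ↦ ?_, ?_, ?_⟩
  · obtain ⟨m, rfl⟩ : ∃ m, i = m + 1 := ⟨i - 1, by omega⟩
    have h := incompleteMoment_derivative z y (legendrePoly (m + 2) - legendrePoly m)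
    rw [derivative_legendrePoly_add_two_sub, incompleteMoment_C_mul, incompleteMoment_sub,
      eval_neg_one_legendrePoly_add_two_sub, eval_sub, ← hR', ← hR', ← hR'] at h
    rw [Nat.add_sub_cancel]
    field_simp
    push_cast at h ⊢
    linear_combination -h
  · field_simp
    linear_combination -h₀
  · field_simp
    linear_combination -z * h₁ - h₀

/-- Recurrence for the incomplete Legendre moments
r_i(z,y) = ∫_{−1}^y e^{z(y−x)} P_i(x) dx. -/
theorem incomplete_legendre_moment_recurrence (z : ℂ) (hz : z ≠ 0)
    (y : ℝ) (hy : y ∈ Set.Icc (-1 : ℝ) 1)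
    (R : ℕ → ℂ)
    (hR : ∀ i : ℕ, R i =
      ∫ x in (-1:ℝ)..y, Complex.exp (z * ((y : ℂ) - x)) *
        (((legendrePoly i).eval x : ℝ) : ℂ)) :
    (∀ i : ℕ, 1 ≤ i → R (i + 1) = ((2 * i + 1) / z) * R i + R (i - 1)
        - (1 / z) * ((((legendrePoly (i + 1)).eval y : ℝ) : ℂ)
          - (((legendrePoly (i - 1)).eval y : ℝ) : ℂ))) ∧
    R 0 = (Complex.exp (z * (1 + (y : ℂ))) - 1) / z ∧
    R 1 = (Complex.exp (z * (1 + (y : ℂ))) * (1 - z) - (1 + z * (y : ℂ))) / z ^ 2 :=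
  incomplete_legendre_moment_recurrence_general z hz y R hR
end
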